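/- Irregular emergent subjective prior example: the single-player game with uncertainty with action set 𝒜_1 = {U, D}, parameter set Θ = {L, C, R}, and utility matrix U_1 = [[1,0,0],[0,0,1]] (rows indexed by actions U, D and columns by states L, C, R) has a unique extended equilibrium, given by σ*_1 = (1/2, 1/2) and π*_1 = (1/2, 0, 1/2); in particular the equilibrium prior assigns probability zero to the state C. -/

import Mathlib

open Finset

noncomputable section

/-- A probability distribution on a finite type. -/
def IsDist {α : Type*} [Fintype α] (p : α → ℝ) : Prop :=
  (∀ x, 0 ≤ p x) ∧ ∑ x, p x = 1

variable {N : ℕ} {A : Fin N → Type*} [∀ j, Fintype (A j)] [∀ j, Nonempty (A j)]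
  {Θ : Type*} [Fintype Θ] [Nonempty Θ]

/-- `Π(a|σ) = ∏ⱼ σⱼ(aⱼ)`. -/
def piProb (σ : ∀ j : Fin N, A j → ℝ) (a : ∀ j : Fin N, A j) : ℝ := ∏ j, σ j (a j)

/-- Effective utility matrix `EUᵢ(aᵢ;θ|σ)`. -/
def EUmat (U : ∀ i : Fin N, (∀ j : Fin N, A j) → Θ → ℝ) (σ : ∀ j : Fin N, A j → ℝ)
    (i : Fin N) (ai : A i) (θ : Θ) : ℝ :=
  ∑ b : ∀ j : Fin N, A j, U i (Function.update b i ai) θ * piProb σ b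

/-- Effective regret matrix `ERᵢ(aᵢ;θ|σ)`. -/
def ERmat (U : ∀ i : Fin N, (∀ j : Fin N, A j) → Θ → ℝ) (σ : ∀ j : Fin N, A j → ℝ)
    (i : Fin N) (ai : A i) (θ : Θ) : ℝ :=
  (Finset.univ.sup' Finset.univ_nonempty fun ci : A i => EUmat U σ i ci θ) - EUmat U σ i ai θ

/-- Expected utility of action `aᵢ`: `EUᵢ(aᵢ|σ;π)`. -/
def EUact (U : ∀ i : Fin N, (∀ j : Fin N, A j) → Θ → ℝ) (σ : ∀ j : Fin N, A j → ℝ) (π : Fin N → Θ → ℝ)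
    (i : Fin N) (ai : A i) : ℝ :=
  ∑ θ, EUmat U σ i ai θ * π i θ

/-- Expected utility `EUᵢ(σ;π)`. -/
def EUtot (U : ∀ i : Fin N, (∀ j : Fin N, A j) → Θ → ℝ) (σ : ∀ j : Fin N, A j → ℝ) (π : Fin N → Θ → ℝ)
    (i : Fin N) : ℝ :=
  ∑ ai, EUact U σ π i ai * σ i ai

/-- Expected regret at parameter `θ`: `ERᵢ(θ|σ;π)`. -/
def ERparam (U : ∀ i : Fin N, (∀ j : Fin N, A j) → Θ → ℝ) (σ : ∀ j : Fin N, A j → ℝ)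
    (i : Fin N) (θ : Θ) : ℝ :=
  ∑ ai, ERmat U σ i ai θ * σ i ai

/-- Expected regret `ERᵢ(σ;π)`. -/
def ERtot (U : ∀ i : Fin N, (∀ j : Fin N, A j) → Θ → ℝ) (σ : ∀ j : Fin N, A j → ℝ) (π : Fin N → Θ → ℝ)
    (i : Fin N) : ℝ :=
  ∑ θ, ERparam U σ i θ * π i θ

/-- Extended equilibrium conditions. -/
def ExtendedEquilibrium (U : ∀ i : Fin N, (∀ j : Fin N, A j) → Θ → ℝ)
    (σ : ∀ j : Fin N, A j → ℝ) (π : Fin N → Θ → ℝ) : Prop :=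
  (∀ i, ∀ ai : A i, EUtot U σ π i ≥ EUact U σ π i ai) ∧
  (∀ i, ∀ θ : Θ, ERtot U σ π i ≥ ERparam U σ i θ)

/-- φ_{i,aᵢ}(σ;π). -/
def phi (U : ∀ i : Fin N, (∀ j : Fin N, A j) → Θ → ℝ) (σ : ∀ j : Fin N, A j → ℝ) (π : Fin N → Θ → ℝ)
    (i : Fin N) (ai : A i) : ℝ :=
  max 0 (EUact U σ π i ai - EUtot U σ π i)

/-- ψ_{i,θ}(σ;π). -/
def psi (U : ∀ i : Fin N, (∀ j : Fin N, A j) → Θ → ℝ) (σ : ∀ j : Fin N, A j → ℝ) (π : Fin N → Θ → ℝ)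
    (i : Fin N) (θ : Θ) : ℝ :=
  max 0 (ERparam U σ i θ - ERtot U σ π i)

/-- Real-strategy part of the auxiliary map `Υ`. -/
def nextStrat (U : ∀ i : Fin N, (∀ j : Fin N, A j) → Θ → ℝ) (σ : ∀ j : Fin N, A j → ℝ) (π : Fin N → Θ → ℝ)
    (i : Fin N) (ai : A i) : ℝ :=
  (σ i ai + phi U σ π i ai) / (1 + ∑ bi, phi U σ π i bi)

/-- Prior part of the auxiliary map `Υ`. -/
def nextPrior (U : ∀ i : Fin N, (∀ j : Fin N, A j) → Θ → ℝ) (σ : ∀ j : Fin N, A j → ℝ) (π : Fin N → Θ → ℝ)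
    (i : Fin N) (θ : Θ) : ℝ :=
  (π i θ + psi U σ π i θ) / (1 + ∑ χ, psi U σ π i χ)

/-- The auxiliary map `Υ`. -/
def Upsilon (U : ∀ i : Fin N, (∀ j : Fin N, A j) → Θ → ℝ)
    (ρ : (∀ i, A i → ℝ) × (Fin N → Θ → ℝ)) : (∀ i, A i → ℝ) × (Fin N → Θ → ℝ) :=
  (fun i => nextStrat U ρ.1 ρ.2 i, fun i => nextPrior U ρ.1 ρ.2 i)

/-- The single-player game with an irregular emergent subjective prior: utility matrix
`[[1,0,0],[0,0,1]]`, rows indexed by the actions `U`, `D`, columns by states `L`, `C`, `R`. -/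
def IrrU : ∀ _ : Fin 1, (∀ _ : Fin 1, Fin 2) → Fin 3 → ℝ := fun _ a θ =>
  !![(1:ℝ), 0, 0; 0, 0, 1] (a 0) θ

/-- The equilibrium strategy `σ*₁ = (1/2, 1/2)`. -/
def Irrσ : ∀ _ : Fin 1, Fin 2 → ℝ := fun _ => ![1 / 2, 1 / 2]

/-- The emergent subjective equilibrium prior `π*₁ = (1/2, 0, 1/2)`. -/
def Irrπ : Fin 1 → Fin 3 → ℝ := fun _ => ![1 / 2, 0, 1 / 2]

theorem Finset.sup'_univ_fin_two {β : Type*} [LinearOrder β] (f : Fin 2 → β) :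
    univ.sup' univ_nonempty f = max (f 0) (f 1) :=
  le_antisymm (sup'_le _ _ fun i _ => by fin_cases i <;> simp)
    (max_le (le_sup' f (mem_univ 0)) (le_sup' f (mem_univ 1)))

section SinglePlayer

variable {α Θ : Type*} [Fintype α] (U : Fin 1 → (Fin 1 → α) → Θ → ℝ) {σ : Fin 1 → α → ℝ}

theorem EUmat_fin_one (hσ : ∑ c, σ 0 c = 1) (a : α) (θ : Θ) :
    EUmat U σ 0 a θ = U 0 (fun _ => a) θ := by
  have h_update (b : Fin 1 → α) : Function.update b 0 a = fun _ => a :=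
    funext fun j => by rw [Subsingleton.elim j 0, Function.update_self]
  have h_marginal : ∑ b : Fin 1 → α, σ 0 (b 0) = 1 :=
    (Fintype.sum_equiv (Equiv.funUnique (Fin 1) α) _ _ fun _ => rfl).trans hσ
  simp only [EUmat, piProb, h_update, Fin.prod_univ_one, ← mul_sum, h_marginal, mul_one]

theorem ERmat_fin_one [Nonempty α] (hσ : ∑ c, σ 0 c = 1) (a : α) (θ : Θ) :
    ERmat U σ 0 a θ =
      univ.sup' univ_nonempty (fun c => U 0 (fun _ => c) θ) - U 0 (fun _ => a) θ := by
  simp only [ERmat, EUmat_fin_one U hσ]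

end SinglePlayer

section IrrGame

variable {σ : Fin 1 → Fin 2 → ℝ} (π : Fin 1 → Fin 3 → ℝ)

theorem EUact_IrrU (hσ : ∑ c, σ 0 c = 1) : EUact IrrU σ π 0 = ![π 0 0, π 0 2] := by
  ext a
  simp only [EUact, EUmat_fin_one IrrU hσ, Fin.sum_univ_three]
  fin_cases a <;> simp [IrrU]

theorem EUtot_IrrU (hσ : ∑ c, σ 0 c = 1) :
    EUtot IrrU σ π 0 = π 0 0 * σ 0 0 + π 0 2 * σ 0 1 := by
  simp [EUtot, EUact_IrrU π hσ, Fin.sum_univ_two]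

theorem ERparam_IrrU (hσ : ∑ c, σ 0 c = 1) : ERparam IrrU σ 0 = ![σ 0 1, 0, σ 0 0] := by
  ext θ
  simp only [ERparam, ERmat_fin_one IrrU hσ, Finset.sup'_univ_fin_two, Fin.sum_univ_two]
  fin_cases θ <;> simp [IrrU]

theorem ERtot_IrrU (hσ : ∑ c, σ 0 c = 1) :
    ERtot IrrU σ π 0 = σ 0 1 * π 0 0 + σ 0 0 * π 0 2 := by
  simp [ERtot, ERparam_IrrU hσ, Fin.sum_univ_three]

theorem extendedEquilibrium_IrrU_iff (hσ : ∑ c, σ 0 c = 1) :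
    ExtendedEquilibrium IrrU σ π ↔
      (π 0 0 ≤ π 0 0 * σ 0 0 + π 0 2 * σ 0 1 ∧ π 0 2 ≤ π 0 0 * σ 0 0 + π 0 2 * σ 0 1) ∧
      (σ 0 1 ≤ σ 0 1 * π 0 0 + σ 0 0 * π 0 2 ∧ 0 ≤ σ 0 1 * π 0 0 + σ 0 0 * π 0 2 ∧
        σ 0 0 ≤ σ 0 1 * π 0 0 + σ 0 0 * π 0 2) := by
  simp [ExtendedEquilibrium, Fin.forall_fin_succ, EUtot_IrrU π hσ, EUact_IrrU π hσ,
    ERtot_IrrU π hσ, ERparam_IrrU hσ]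

end IrrGame

/- With `s, t` the weights of `U, D` and `p, q, r` those of `L, C, R`, the two utility conditions
say `t (r - p) ≥ 0` and `s (p - r) ≥ 0`, while the two regret conditions at `L` and `R` add up to
`q + (t - s)(r - p) ≤ 0`; hence `q = 0`, and a pure strategy would violate one of the conditions. -/
theorem eq_half_of_equilibrium_conditions {s t p q r : ℝ} (hs : 0 ≤ s) (ht : 0 ≤ t) (hq : 0 ≤ q)
    (hst : s + t = 1) (hpqr : p + q + r = 1) (hUp : p ≤ p * s + r * t)
    (hDown : r ≤ p * s + r * t) (hL : t ≤ t * p + s * r) (hR : s ≤ t * p + s * r) :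
    s = 1 / 2 ∧ t = 1 / 2 ∧ p = 1 / 2 ∧ q = 0 ∧ r = 1 / 2 := by
  have hUp_slack : 0 ≤ t * (r - p) := by linear_combination hUp + p * hst
  have hDown_slack : 0 ≤ s * (p - r) := by linear_combination hDown + r * hst
  have hq_zero : q = 0 := by
    have : q + t * (r - p) + s * (p - r) ≤ 0 := by
      linear_combination hL + hR + (t + s) * hpqr - q * hst
    linarith
  have hs_pos : 0 < s := by
    by_contra! hs0
    nlinarith
  have ht_pos : 0 < t := by
    by_contra! ht0
    nlinarith
  have hpr : p = r := by
    have := nonneg_of_mul_nonneg_right hUp_slack ht_pos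
    have := nonneg_of_mul_nonneg_right hDown_slack hs_pos
    linarith
  have hp : p = 1 / 2 := by linarith
  subst hpr
  rw [hp] at hL hR
  refine ⟨?_, ?_, hp, hq_zero, hp⟩ <;> linarith

/-- the single-player game above has a unique extended equilibrium,
`σ*₁ = (1/2,1/2)`, `π*₁ = (1/2,0,1/2)`; in particular the equilibrium prior assigns
probability zero to the middle state `C`. -/
theorem irregular_prior_unique_equilibrium :
    (∀ (σ : ∀ _ : Fin 1, Fin 2 → ℝ) (π : Fin 1 → Fin 3 → ℝ),
      ((∀ i, IsDist (σ i)) ∧ (∀ i, IsDist (π i)) ∧ ExtendedEquilibrium IrrU σ π) ↔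
        (σ = Irrσ ∧ π = Irrπ)) ∧
    Irrπ 0 1 = 0 := by
  refine ⟨fun σ π => ⟨?_, ?_⟩, rfl⟩
  · rintro ⟨hσ, hπ, hEq⟩
    obtain ⟨⟨hUp, hDown⟩, hL, -, hR⟩ := (extendedEquilibrium_IrrU_iff π (hσ 0).2).1 hEq
    have hst : σ 0 0 + σ 0 1 = 1 := by simpa [Fin.sum_univ_two] using (hσ 0).2
    have hpqr : π 0 0 + π 0 1 + π 0 2 = 1 := by simpa [Fin.sum_univ_three] using (hπ 0).2
    obtain ⟨hs, ht, hp, hq, hr⟩ := eq_half_of_equilibrium_conditions ((hσ 0).1 0) ((hσ 0).1 1)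
      ((hπ 0).1 1) hst hpqr hUp hDown hL hR
    refine ⟨funext fun i => ?_, funext fun i => ?_⟩ <;> rw [Subsingleton.elim i 0] <;> ext x <;>
      fin_cases x <;> simp [Irrσ, Irrπ, *]
  · rintro ⟨rfl, rfl⟩
    have hσ : ∑ c, Irrσ 0 c = 1 := by norm_num [Irrσ]
    refine ⟨fun _ => ⟨fun x => ?_, hσ⟩, fun _ => ⟨fun x => ?_, ?_⟩,
      (extendedEquilibrium_IrrU_iff Irrπ hσ).2 ?_⟩ <;>
      (try fin_cases x) <;>
      norm_num [Irrσ, Irrπ, Fin.sum_univ_three, Matrix.cons_val_two, Matrix.tail_cons]
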